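/- arXiv:2203.12895 — 8 statements merged into one kernel-verified Lean document; each statement's English description precedes it below -/
import Mathlib

section
/- Let α be a positive integer, 0 < p = 1 - q < 1, z ∈ ℝ, and define g_z : {0,1,…,α} → ℝ by g_z(0) = 0 and, for 1 ≤ k ≤ α, g_z(k) = -∑_{j=k}^{α} [(α-k)!/(α-j)!] · [(k-1)!/j!] · (p/q)^{j-k} · [(j-z)^+ - E(B_{α,p}-z)^+]. Then g_z solves the Stein equation: for every k = 0,1,…,α, ((α-k)p/q) g_z(k+1) - k g_z(k) = (k-z)^+ - E(B_{α,p}-z)^+ (where g_z(α+1) may be taken to be 0, since the coefficient (α-k)p/q vanishes at k = α). -/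
open Finset

/-- `E[(B_{α,p} - z)^+]`, the expected call function of a binomial random variable
`B_{α,p}` with `P(B = j) = C(α,j) p^j (1-p)^{α-j}` for `j = 0,…,α`. -/
noncomputable def binomCallExp (α : ℕ) (p z : ℝ) : ℝ :=
  ∑ j ∈ Finset.range (α + 1),
    (α.choose j : ℝ) * p ^ j * (1 - p) ^ (α - j) * max ((j : ℝ) - z) 0

/-- `h₁(k) = ∑_{j=k}^{α} [(α-k)!/(α-j)!]·[(k-1)!/j!]·(p/q)^{j-k}·(j-z)^+` with `q = 1 - p`. -/
noncomputable def h1 (α : ℕ) (p z : ℝ) (k : ℕ) : ℝ :=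
  ∑ j ∈ Finset.Icc k α,
    ((α - k).factorial : ℝ) / ((α - j).factorial : ℝ) *
      (((k - 1).factorial : ℝ) / (j.factorial : ℝ)) *
        (p / (1 - p)) ^ (j - k) * max ((j : ℝ) - z) 0

/-- `h₂(k) = ∑_{j=k}^{α} [(α-k)!/(α-j)!]·[(k-1)!/j!]·(p/q)^{j-k}·E[(B_{α,p}-z)^+]`
with `q = 1 - p`. -/
noncomputable def h2 (α : ℕ) (p z : ℝ) (k : ℕ) : ℝ :=
  ∑ j ∈ Finset.Icc k α,
    ((α - k).factorial : ℝ) / ((α - j).factorial : ℝ) *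
      (((k - 1).factorial : ℝ) / (j.factorial : ℝ)) *
        (p / (1 - p)) ^ (j - k) * binomCallExp α p z

/-- The solution `g_z` of the binomial Stein equation: `g_z(0) = 0`,
`g_z(k) = -∑_{j=k}^{α} [(α-k)!/(α-j)!]·[(k-1)!/j!]·(p/q)^{j-k}·[(j-z)^+ - E(B_{α,p}-z)^+]`
for `1 ≤ k ≤ α`, extended by `g_z(k) = 0` for `k > α` (in particular `g_z(α+1) = 0`). -/
noncomputable def steinSol (α : ℕ) (p z : ℝ) (k : ℕ) : ℝ :=
  if k = 0 ∨ α < k then 0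
  else
    -∑ j ∈ Finset.Icc k α,
      ((α - k).factorial : ℝ) / ((α - j).factorial : ℝ) *
        (((k - 1).factorial : ℝ) / (j.factorial : ℝ)) *
          (p / (1 - p)) ^ (j - k) * (max ((j : ℝ) - z) 0 - binomCallExp α p z)

/-!
Write `r = p / q` and `π j = C(α, j) r ^ j`, which is proportional to the binomial law. Then
`k π k g_z(k) = -∑_{j=k}^{α} π j c j` with `c j = (j - z)^+ - E(B_{α,p} - z)^+`; for `k = 0` this
holds too because `c` is centred under the binomial law. Since `(α - k) r π k = (k + 1) π (k + 1)`,
multiplying the Stein equation by `π k` turns its left side into a difference of two consecutive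
tail sums, which is `π k c k`.
-/

lemma sum_choose_mul_pow_mul_one_sub_pow (α : ℕ) (p : ℝ) :
    ∑ j ∈ range (α + 1), (α.choose j : ℝ) * p ^ j * (1 - p) ^ (α - j) = 1 := by
  calc _ = (p + (1 - p)) ^ α := by
        rw [add_pow]
        exact sum_congr rfl fun _ _ => by ring
    _ = 1 := by simp

lemma sum_choose_mul_odds_pow_mul_centered_call {p : ℝ} (hp1 : p ≠ 1) (α : ℕ) (z : ℝ) :
    ∑ j ∈ Icc 0 α, (α.choose j : ℝ) * (p / (1 - p)) ^ j *
      (max ((j : ℝ) - z) 0 - binomCallExp α p z) = 0 := by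
  have hq : (1 - p) ^ α ≠ 0 := pow_ne_zero _ (sub_ne_zero.mpr hp1.symm)
  refine (mul_eq_zero.mp ?_).resolve_left hq
  calc (1 - p) ^ α * ∑ j ∈ Icc 0 α, (α.choose j : ℝ) * (p / (1 - p)) ^ j *
        (max ((j : ℝ) - z) 0 - binomCallExp α p z)
      = ∑ j ∈ range (α + 1), (α.choose j : ℝ) * p ^ j * (1 - p) ^ (α - j) *
          (max ((j : ℝ) - z) 0 - binomCallExp α p z) := by
        rw [mul_sum, Nat.range_succ_eq_Icc_zero]
        refine sum_congr rfl fun j hj => ?_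
        rw [← pow_sub_mul_pow (1 - p) (mem_Icc.mp hj).2, div_pow]
        field_simp
    _ = 0 := by
        simp only [mul_sub, sum_sub_distrib, ← sum_mul, sum_choose_mul_pow_mul_one_sub_pow,
          binomCallExp, one_mul, sub_self]

lemma choose_mul_pow_mul_factorial_ratio (r : ℝ) {α k j : ℕ} (hk : 1 ≤ k) (hkj : k ≤ j)
    (hjα : j ≤ α) :
    k * α.choose k * r ^ k * (((α - k).factorial : ℝ) / (α - j).factorial *
      (((k - 1).factorial : ℝ) / j.factorial) * r ^ (j - k)) = α.choose j * r ^ j := by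
  rw [Nat.cast_choose ℝ (hkj.trans hjα), Nat.cast_choose ℝ hjα, ← pow_mul_pow_sub r hkj,
    ← Nat.mul_factorial_pred (by omega : k ≠ 0), Nat.cast_mul]
  field_simp

lemma mul_steinSol {p : ℝ} (hp1 : p ≠ 1) (α : ℕ) (z : ℝ) (k : ℕ) :
    k * α.choose k * (p / (1 - p)) ^ k * steinSol α p z k =
      -∑ j ∈ Icc k α, α.choose j * (p / (1 - p)) ^ j *
        (max ((j : ℝ) - z) 0 - binomCallExp α p z) := by
  rcases Nat.eq_zero_or_pos k with rfl | hk
  · simp [sum_choose_mul_odds_pow_mul_centered_call hp1]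
  rcases lt_or_ge α k with hαk | hkα
  · simp [steinSol, hαk]
  rw [steinSol, if_neg (by omega), mul_neg, mul_sum]
  refine congrArg Neg.neg (sum_congr rfl fun j hj => ?_)
  rw [mem_Icc] at hj
  rw [← choose_mul_pow_mul_factorial_ratio _ hk hj.1 hj.2]
  ring

theorem steinSol_solves_stein_equation_general (α : ℕ) (p q : ℝ)
    (hq : q = 1 - p) (hp : 0 < p) (hp1 : p < 1) (z : ℝ) :
    ∀ k ≤ α,
      (((α : ℝ) - k) * p / q) * steinSol α p z (k + 1) - (k : ℝ) * steinSol α p z k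
        = max ((k : ℝ) - z) 0 - binomCallExp α p z := by
  intro k hk
  subst hq
  set r := p / (1 - p)
  have hπ : (α.choose k : ℝ) * r ^ k ≠ 0 :=
    mul_ne_zero (Nat.cast_ne_zero.mpr (Nat.choose_pos hk).ne')
      (pow_ne_zero _ (div_ne_zero hp.ne' (sub_ne_zero.mpr hp1.ne')))
  have hshift : ((α : ℝ) - k) * r * (α.choose k * r ^ k) =
      (k + 1 : ℕ) * α.choose (k + 1) * r ^ (k + 1) := by
    have h := congrArg (Nat.cast (R := ℝ)) (Nat.choose_succ_right_eq α k)
    push_cast [Nat.cast_sub hk] at h ⊢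
    rw [pow_succ]
    linear_combination -(r ^ k * r) * h
  apply mul_left_cancel₀ hπ
  calc (α.choose k : ℝ) * r ^ k *
        (((α : ℝ) - k) * p / (1 - p) * steinSol α p z (k + 1) - k * steinSol α p z k)
      = (k + 1 : ℕ) * α.choose (k + 1) * r ^ (k + 1) * steinSol α p z (k + 1) -
          k * α.choose k * r ^ k * steinSol α p z k := by
        rw [← hshift, mul_div_assoc]
        ring
    _ = _ := by
        rw [mul_steinSol hp1.ne, mul_steinSol hp1.ne, ← add_sum_Ioc_eq_sum_Icc hk,
          Icc_add_one_left_eq_Ioc]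
        ring

/-- The function `g_z` defined by `g_z(0) = 0` and
`g_z(k) = -∑_{j=k}^{α} [(α-k)!/(α-j)!]·[(k-1)!/j!]·(p/q)^{j-k}·[(j-z)^+ - E(B_{α,p}-z)^+]`
for `1 ≤ k ≤ α` (with `g_z(α+1) = 0`) solves the binomial Stein equation:
for every `k = 0,1,…,α`,
`((α-k)p/q) g_z(k+1) - k g_z(k) = (k-z)^+ - E(B_{α,p}-z)^+`. -/
theorem steinSol_solves_stein_equation (α : ℕ) (hα : 0 < α) (p q : ℝ)
    (hq : q = 1 - p) (hp : 0 < p) (hp1 : p < 1) (z : ℝ) :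
    ∀ k ≤ α,
      (((α : ℝ) - k) * p / q) * steinSol α p z (k + 1) - (k : ℝ) * steinSol α p z k
        = max ((k : ℝ) - z) 0 - binomCallExp α p z :=
  steinSol_solves_stein_equation_general α p q hq hp hp1 z
end

section
/- Let α be a positive integer, 0 < p = 1 - q < 1, and 0 < z ≤ α. Then E[(B_{α,p} - z)^+] ≤ α(α - z)p / z. -/
open Finset

/-!
On `[0, a]` the call payoff `(x - z)^+` lies below the line `x (a - z) / z`, so
`z E[(B - z)^+] ≤ (α - z) E[B] = α (α - z) p`.
-/

theorem sum_range_mul_choose_mul_pow_mul_one_sub_pow (n : ℕ) (p : ℝ) :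
    ∑ j ∈ range (n + 1), (j : ℝ) * ((n.choose j : ℝ) * p ^ j * (1 - p) ^ (n - j)) = n * p := by
  simpa [bernsteinPolynomial, Polynomial.eval_finsetSum, nsmul_eq_mul] using
    congrArg (Polynomial.eval p) (bernsteinPolynomial.sum_smul ℝ n)

theorem mul_max_sub_zero_le {x a z : ℝ} (hx : 0 ≤ x) (hxa : x ≤ a) (hza : z ≤ a) :
    z * max (x - z) 0 ≤ x * (a - z) := by
  rcases le_total x z with hxz | hzx
  · rw [max_eq_right (by linarith), mul_zero]
    exact mul_nonneg hx (by linarith)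
  · rw [max_eq_left (by linarith)]
    -- the gap is `(x - z)² + x (a - x)`
    nlinarith [sq_nonneg (x - z), mul_nonneg hx (sub_nonneg.2 hxa)]

theorem mul_binomCallExp_le {α : ℕ} {p z : ℝ} (hp : 0 ≤ p) (hp1 : p ≤ 1) (hzα : z ≤ α) :
    z * binomCallExp α p z ≤ α * (α - z) * p := by
  calc z * binomCallExp α p z
      = ∑ j ∈ range (α + 1),
          (α.choose j : ℝ) * p ^ j * (1 - p) ^ (α - j) * (z * max ((j : ℝ) - z) 0) := by
        rw [binomCallExp, mul_sum]
        exact sum_congr rfl fun _ _ ↦ by ring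
    _ ≤ ∑ j ∈ range (α + 1),
          (α.choose j : ℝ) * p ^ j * (1 - p) ^ (α - j) * (j * (α - z)) := by
        refine sum_le_sum fun j hj ↦ mul_le_mul_of_nonneg_left ?_ (by bound)
        have hjα : (j : ℝ) ≤ α := by exact_mod_cast mem_range_succ_iff.1 hj
        exact mul_max_sub_zero_le j.cast_nonneg hjα hzα
    _ = (α - z) * ∑ j ∈ range (α + 1),
          (j : ℝ) * ((α.choose j : ℝ) * p ^ j * (1 - p) ^ (α - j)) := by
        rw [mul_sum]
        exact sum_congr rfl fun _ _ ↦ by ring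
    _ = α * (α - z) * p := by
        rw [sum_range_mul_choose_mul_pow_mul_one_sub_pow]
        ring

theorem binomCallExp_le_of_le_general (α : ℕ) (p : ℝ)
    (hp : 0 < p) (hp1 : p < 1) (z : ℝ) (hz : 0 < z) (hzα : z ≤ (α : ℝ)) :
    binomCallExp α p z ≤ (α : ℝ) * ((α : ℝ) - z) * p / z := by
  rw [le_div_iff₀ hz, mul_comm]
  exact mul_binomCallExp_le hp.le hp1.le hzα

/-- For `0 < z ≤ α`, the expected call function of the binomial distribution satisfies
`E[(B_{α,p} - z)^+] ≤ α (α - z) p / z`. -/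
theorem binomCallExp_le_of_le (α : ℕ) (hα : 0 < α) (p q : ℝ)
    (hq : q = 1 - p) (hp : 0 < p) (hp1 : p < 1) (z : ℝ) (hz : 0 < z) (hzα : z ≤ (α : ℝ)) :
    binomCallExp α p z ≤ (α : ℝ) * ((α : ℝ) - z) * p / z :=
  binomCallExp_le_of_le_general α p hp hp1 z hz hzα
end

section
/- Let α be a positive integer, 0 < p = 1 - q < 1, z ≥ 0, and for 1 ≤ k ≤ α define h₁(k) = ∑_{j=k}^{α} [(α-k)!/(α-j)!] · [(k-1)!/j!] · (p/q)^{j-k} · (j-z)^+. Then 0 ≤ h₁(k) ≤ q^{k-α} for all 1 ≤ k ≤ α. -/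
open Finset

/-- For `z ≥ 0` and `1 ≤ k ≤ α`, the quantity
`h₁(k) = ∑_{j=k}^{α} [(α-k)!/(α-j)!]·[(k-1)!/j!]·(p/q)^{j-k}·(j-z)^+`
satisfies `0 ≤ h₁(k)` and `h₁(k) ≤ q^{k-α}`. -/
theorem h1_nonneg_and_le (α : ℕ) (hα : 0 < α) (p q : ℝ)
    (hq : q = 1 - p) (hp : 0 < p) (hp1 : p < 1) (z : ℝ) (hz : 0 ≤ z)
    (k : ℕ) (hk : 1 ≤ k) (hkα : k ≤ α) :
    0 ≤ h1 α p z k ∧ h1 α p z k ≤ q ^ ((k : ℤ) - (α : ℤ)) := by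
  have hq0 : 0 < 1 - p := by linarith
  have hx0 : 0 ≤ p / (1 - p) := div_nonneg hp.le hq0.le
  have hterm_nonneg : ∀ j ∈ Finset.Icc k α,
      0 ≤ ((α - k).factorial : ℝ) / ((α - j).factorial : ℝ) *
        (((k - 1).factorial : ℝ) / (j.factorial : ℝ)) *
          (p / (1 - p)) ^ (j - k) * max ((j : ℝ) - z) 0 := by
    intro j _
    have h1 : (0:ℝ) ≤ ((α - k).factorial : ℝ) / ((α - j).factorial : ℝ) := by positivity
    have h2 : (0:ℝ) ≤ (((k - 1).factorial : ℝ) / (j.factorial : ℝ)) := by positivity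
    have h3 : (0:ℝ) ≤ (p / (1 - p)) ^ (j - k) := pow_nonneg hx0 _
    exact mul_nonneg (mul_nonneg (mul_nonneg h1 h2) h3) (le_max_right _ _)
  constructor
  · exact Finset.sum_nonneg hterm_nonneg
  · have key : ∀ j ∈ Finset.Icc k α,
        ((α - k).factorial : ℝ) / ((α - j).factorial : ℝ) *
          (((k - 1).factorial : ℝ) / (j.factorial : ℝ)) *
            (p / (1 - p)) ^ (j - k) * max ((j : ℝ) - z) 0
        ≤ ((α - k).choose (j - k) : ℝ) * (p / (1 - p)) ^ (j - k) := by
      intro j hj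
      obtain ⟨hkj, hjα⟩ := Finset.mem_Icc.mp hj
      have hj1 : 1 ≤ j := le_trans hk hkj
      have hmax : max ((j : ℝ) - z) 0 ≤ (j : ℝ) :=
        max_le (by linarith) (Nat.cast_nonneg j)
      have hcoef0 : (0:ℝ) ≤ ((α - k).factorial : ℝ) / ((α - j).factorial : ℝ) *
          (((k - 1).factorial : ℝ) / (j.factorial : ℝ)) * (p / (1 - p)) ^ (j - k) := by
        have h3 : (0:ℝ) ≤ (p / (1 - p)) ^ (j - k) := pow_nonneg hx0 _
        positivity
      -- nat inequality: (k-1)! * (j-k)! * j ≤ j!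
      have hnat : (k - 1).factorial * (j - k).factorial * j ≤ j.factorial := by
        have hdvd : (k - 1).factorial * (j - k).factorial ≤ (j - 1).factorial := by
          have := Nat.factorial_mul_factorial_dvd_factorial_add (k - 1) (j - k)
          have heq : k - 1 + (j - k) = j - 1 := by omega
          rw [heq] at this
          exact Nat.le_of_dvd (Nat.factorial_pos _) this
        calc (k - 1).factorial * (j - k).factorial * j ≤ (j - 1).factorial * j :=
              Nat.mul_le_mul_right _ hdvd
          _ = j.factorial := by
              rw [mul_comm]
              conv_rhs => rw [show j = (j - 1) + 1 by omega]
              rw [Nat.factorial_succ]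
              congr 1
              omega
      -- coefficient bound in ℝ
      have hcoefle : ((α - k).factorial : ℝ) / ((α - j).factorial : ℝ) *
          (((k - 1).factorial : ℝ) / (j.factorial : ℝ)) * (j : ℝ)
          ≤ ((α - k).choose (j - k) : ℝ) := by
        have hchoose : ((α - k).choose (j - k) : ℝ) =
            ((α - k).factorial : ℝ) / (((j - k).factorial : ℝ) * ((α - k - (j - k)).factorial : ℝ)) := by
          rw [Nat.cast_choose ℝ (by omega : j - k ≤ α - k)]
        have hsub : α - k - (j - k) = α - j := by omega
        rw [hchoose, hsub]
        rw [div_mul_div_comm, div_mul_eq_mul_div, div_le_div_iff₀ (by positivity) (by positivity)]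
        have hR : ((k - 1).factorial : ℝ) * (j : ℝ) * ((j - k).factorial : ℝ) ≤ (j.factorial : ℝ) := by
          exact_mod_cast (by calc (k - 1).factorial * j * (j - k).factorial
                = (k - 1).factorial * (j - k).factorial * j := by ring
            _ ≤ j.factorial := hnat)
        calc ((α - k).factorial : ℝ) * ((k - 1).factorial : ℝ) * (j : ℝ) *
              (((j - k).factorial : ℝ) * ((α - j).factorial : ℝ))
            = ((α - k).factorial : ℝ) * ((α - j).factorial : ℝ) *
              (((k - 1).factorial : ℝ) * (j : ℝ) * ((j - k).factorial : ℝ)) := by ring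
          _ ≤ ((α - k).factorial : ℝ) * ((α - j).factorial : ℝ) * (j.factorial : ℝ) := by
              apply mul_le_mul_of_nonneg_left hR (by positivity)
          _ = ((α - k).factorial : ℝ) * (((α - j).factorial : ℝ) * (j.factorial : ℝ)) := by ring
      calc ((α - k).factorial : ℝ) / ((α - j).factorial : ℝ) *
            (((k - 1).factorial : ℝ) / (j.factorial : ℝ)) *
              (p / (1 - p)) ^ (j - k) * max ((j : ℝ) - z) 0
          ≤ ((α - k).factorial : ℝ) / ((α - j).factorial : ℝ) *
            (((k - 1).factorial : ℝ) / (j.factorial : ℝ)) *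
              (p / (1 - p)) ^ (j - k) * (j : ℝ) :=
            mul_le_mul_of_nonneg_left hmax hcoef0
        _ = ((α - k).factorial : ℝ) / ((α - j).factorial : ℝ) *
            (((k - 1).factorial : ℝ) / (j.factorial : ℝ)) * (j : ℝ) *
              (p / (1 - p)) ^ (j - k) := by ring
        _ ≤ ((α - k).choose (j - k) : ℝ) * (p / (1 - p)) ^ (j - k) :=
            mul_le_mul_of_nonneg_right hcoefle (pow_nonneg hx0 _)
    have hsum : h1 α p z k ≤ ∑ j ∈ Finset.Icc k α,
        ((α - k).choose (j - k) : ℝ) * (p / (1 - p)) ^ (j - k) :=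
      Finset.sum_le_sum key
    have hreindex : ∑ j ∈ Finset.Icc k α,
        ((α - k).choose (j - k) : ℝ) * (p / (1 - p)) ^ (j - k)
        = ∑ i ∈ Finset.range (α - k + 1),
            ((α - k).choose i : ℝ) * (p / (1 - p)) ^ i := by
      rw [show Finset.Icc k α = Finset.Ico k (α + 1) by rw [Finset.Ico_add_one_right_eq_Icc],
        Finset.sum_Ico_eq_sum_range, show α + 1 - k = α - k + 1 by omega]
      apply Finset.sum_congr rfl
      intro i _
      rw [show k + i - k = i by omega]
    have hbinom : ∑ i ∈ Finset.range (α - k + 1),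
        ((α - k).choose i : ℝ) * (p / (1 - p)) ^ i = (p / (1 - p) + 1) ^ (α - k) := by
      rw [add_pow]
      apply Finset.sum_congr rfl
      intro i _
      simp [mul_comm]
    have hqval : (p / (1 - p) + 1) ^ (α - k) = (1 / (1 - p)) ^ (α - k) := by
      congr 1
      field_simp
      ring
    have hzpow : q ^ ((k : ℤ) - (α : ℤ)) = (1 / (1 - p)) ^ (α - k) := by
      rw [hq]
      rw [show (k : ℤ) - (α : ℤ) = -((α - k : ℕ) : ℤ) by push_cast [hkα]; ring]
      rw [zpow_neg, zpow_natCast, one_div, inv_pow]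
    rw [hzpow]
    calc h1 α p z k ≤ _ := hsum
      _ = (1 / (1 - p)) ^ (α - k) := by rw [hreindex, hbinom, hqval]
end

section
/- Let α be a positive integer, 0 < p = 1 - q < 1, z ≥ 0, and for 1 ≤ k ≤ α define h₂(k) = ∑_{j=k}^{α} [(α-k)!/(α-j)!] · [(k-1)!/j!] · (p/q)^{j-k} · E[(B_{α,p}-z)^+]. Then h₂(k) ≤ q^{k-α}. -/
/-! Since `(j - z)⁺ ≤ j` for `z ≥ 0`, `E[(B_{α,p} - z)⁺] ≤ E[B_{α,p}] = α p`. Multiplying the `j`-th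
coefficient of `h₂(k)` by `α p q^{α-k}` gives at most the binomial weight
`C(α-k+1, j-k+1) p^{j-k+1} q^{α-j}`; after cancelling factorials this is `α ≤ (α-k+1) C(j, k-1)`,
which holds because `C(j, k-1) ≥ k`. These weights sum to `1 - q^{α-k+1} ≤ 1`. -/

open Finset

open Nat

lemma sum_range_choose_mul_pow_mul_pow_mul_cast (n : ℕ) (p : ℝ) :
    ∑ j ∈ range (n + 1), (n.choose j : ℝ) * p ^ j * (1 - p) ^ (n - j) * j = n * p := by
  have := congrArg (Polynomial.eval p) (bernsteinPolynomial.sum_smul ℝ n)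
  simpa [bernsteinPolynomial, Polynomial.eval_finsetSum, mul_comm, mul_left_comm, mul_assoc]
    using this

lemma binomCallExp_le {p z : ℝ} (α : ℕ) (hp : 0 ≤ p) (hp1 : p ≤ 1) (hz : 0 ≤ z) :
    binomCallExp α p z ≤ α * p := by
  rw [← sum_range_choose_mul_pow_mul_pow_mul_cast]
  have : 0 ≤ 1 - p := by linarith
  exact sum_le_sum fun j _ ↦ mul_le_mul_of_nonneg_left (max_le (by linarith) j.cast_nonneg)
    (by positivity)

lemma sum_range_choose_succ_mul_pow_mul_pow (m : ℕ) (p : ℝ) :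
    ∑ i ∈ range (m + 1), ((m + 1).choose (i + 1) : ℝ) * p ^ (i + 1) * (1 - p) ^ (m - i)
      = 1 - (1 - p) ^ (m + 1) := by
  have h := add_pow p (1 - p) (m + 1)
  rw [add_sub_cancel, one_pow, sum_range_succ'] at h
  simp only [Nat.add_sub_add_right, pow_zero, one_mul, Nat.sub_zero, Nat.choose_zero_right,
    Nat.cast_one, mul_one] at h
  rw [eq_sub_iff_add_eq, eq_comm]
  exact h.trans (congrArg (· + _) (sum_congr rfl fun i _ ↦ by ring))

lemma sum_Icc_choose_mul_pow_mul_pow_le_one {k α : ℕ} {p : ℝ} (hkα : k ≤ α) (hp1 : p ≤ 1) :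
    ∑ j ∈ Icc k α, ((α - k + 1).choose (j - k + 1) : ℝ) * p ^ (j - k + 1) * (1 - p) ^ (α - j)
      ≤ 1 := by
  rw [← Ico_add_one_right_eq_Icc, sum_Ico_eq_sum_range, show α + 1 - k = α - k + 1 by omega]
  have hq : 0 ≤ (1 - p) ^ (α - k + 1) := pow_nonneg (by linarith) _
  calc _ = ∑ i ∈ range (α - k + 1),
        ((α - k + 1).choose (i + 1) : ℝ) * p ^ (i + 1) * (1 - p) ^ (α - k - i) := by
        refine sum_congr rfl fun i _ ↦ ?_
        rw [Nat.add_sub_cancel_left, Nat.sub_add_eq]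
    _ ≤ 1 := by rw [sum_range_choose_succ_mul_pow_mul_pow]; linarith

lemma succ_add_mul_factorial_mul_factorial_le (a b c : ℕ) :
    (a + c + 1) * (c ! * (b + 1)!) ≤ (a + 1) * (b + c + 1)! := by
  have hchoose : c + 1 ≤ (b + c + 1).choose c := by
    calc c + 1 = (c + 1).choose c := (Nat.choose_succ_self_right c).symm
      _ ≤ (b + c + 1).choose c := Nat.choose_le_choose c (by omega)
  calc (a + c + 1) * (c ! * (b + 1)!) ≤ (a + 1) * (c + 1) * (c ! * (b + 1)!) := by
        gcongr; nlinarith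
    _ ≤ (a + 1) * ((b + c + 1).choose c * c ! * (b + 1)!) := by
        rw [mul_assoc, mul_assoc]; gcongr
    _ = (a + 1) * (b + c + 1)! := by
        rw [show b + c + 1 = b + 1 + c by ring, ← add_choose_mul_factorial_mul_factorial (b + 1) c]
        ring

noncomputable def steinCoeff (α : ℕ) (p : ℝ) (k j : ℕ) : ℝ :=
  ((α - k)! : ℝ) / (α - j)! * (((k - 1)! : ℝ) / j !) * (p / (1 - p)) ^ (j - k)

lemma steinCoeff_nonneg {p : ℝ} (α k j : ℕ) (hp : 0 ≤ p) (hp1 : p ≤ 1) :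
    0 ≤ steinCoeff α p k j :=
  mul_nonneg (by positivity) (pow_nonneg (div_nonneg hp (by linarith)) _)

lemma mul_steinCoeff_mul_pow_le {α k j : ℕ} {p : ℝ} (hk : 1 ≤ k) (hkj : k ≤ j) (hjα : j ≤ α)
    (hp : 0 ≤ p) (hp1 : p < 1) :
    α * p * steinCoeff α p k j * (1 - p) ^ (α - k)
      ≤ ((α - k + 1).choose (j - k + 1) : ℝ) * p ^ (j - k + 1) * (1 - p) ^ (α - j) := by
  have hq : 1 - p ≠ 0 := by linarith
  have hfac : (α : ℝ) * ((k - 1)! * (j - k + 1)!) ≤ (α - k + 1 : ℕ) * j ! := by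
    have := succ_add_mul_factorial_mul_factorial_le (α - k) (j - k) (k - 1)
    rw [show α - k + (k - 1) + 1 = α by omega, show j - k + (k - 1) + 1 = j by omega] at this
    exact_mod_cast this
  have hchoose : ((α - k + 1).choose (j - k + 1) : ℝ)
      = (α - k + 1 : ℕ) * (α - k)! / ((j - k + 1)! * (α - j)!) := by
    rw [Nat.cast_choose ℝ (by omega : j - k + 1 ≤ α - k + 1), Nat.factorial_succ,
      show α - k + 1 - (j - k + 1) = α - j by omega]
    push_cast
    ring
  have hpow : (1 - p) ^ (α - k) = (1 - p) ^ (j - k) * (1 - p) ^ (α - j) := by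
    rw [← pow_add]; congr 1; omega
  calc α * p * steinCoeff α p k j * (1 - p) ^ (α - k)
        = α * (k - 1)! / j ! * ((α - k)! / (α - j)! * (p ^ (j - k + 1) * (1 - p) ^ (α - j))) := by
        rw [steinCoeff, hpow, div_pow, pow_succ]
        field_simp
    _ ≤ (α - k + 1 : ℕ) / (j - k + 1)! *
          ((α - k)! / (α - j)! * (p ^ (j - k + 1) * (1 - p) ^ (α - j))) := by
        gcongr ?_ * _
        rw [div_le_div_iff₀ (by positivity) (by positivity)]
        linarith
    _ = _ := by
        rw [hchoose]
        field_simp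

theorem h2_le_general (α : ℕ) (p q : ℝ)
    (hq : q = 1 - p) (hp : 0 < p) (hp1 : p < 1) (z : ℝ) (hz : 0 ≤ z)
    (k : ℕ) (hk : 1 ≤ k) (hkα : k ≤ α) :
    h2 α p z k ≤ q ^ ((k : ℤ) - (α : ℤ)) := by
  subst hq
  have hqk : 0 < (1 - p) ^ (α - k) := pow_pos (by linarith) _
  calc h2 α p z k = ∑ j ∈ Icc k α, steinCoeff α p k j * binomCallExp α p z := rfl
    _ ≤ ∑ j ∈ Icc k α, α * p * steinCoeff α p k j := sum_le_sum fun j _ ↦ by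
        rw [mul_comm (α * p : ℝ)]
        exact mul_le_mul_of_nonneg_left (binomCallExp_le α hp.le hp1.le hz)
          (steinCoeff_nonneg α k j hp.le hp1.le)
    _ ≤ ∑ j ∈ Icc k α, ((α - k + 1).choose (j - k + 1) : ℝ) * p ^ (j - k + 1) *
          (1 - p) ^ (α - j) / (1 - p) ^ (α - k) := sum_le_sum fun j hj ↦ by
        rw [mem_Icc] at hj
        exact (le_div_iff₀ hqk).2 (mul_steinCoeff_mul_pow_le hk hj.1 hj.2 hp.le hp1)
    _ = (∑ j ∈ Icc k α, ((α - k + 1).choose (j - k + 1) : ℝ) * p ^ (j - k + 1) *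
          (1 - p) ^ (α - j)) / (1 - p) ^ (α - k) := (sum_div _ _ _).symm
    _ ≤ 1 / (1 - p) ^ (α - k) := by
        gcongr
        exact sum_Icc_choose_mul_pow_mul_pow_le_one hkα hp1.le
    _ = (1 - p) ^ ((k : ℤ) - (α : ℤ)) := by
        rw [one_div, ← zpow_natCast, ← zpow_neg, Nat.cast_sub hkα, neg_sub]

/-- For `z ≥ 0` and `1 ≤ k ≤ α`, the quantity
`h₂(k) = ∑_{j=k}^{α} [(α-k)!/(α-j)!]·[(k-1)!/j!]·(p/q)^{j-k}·E[(B_{α,p}-z)^+]`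
satisfies `h₂(k) ≤ q^{k-α}`. -/
theorem h2_le (α : ℕ) (hα : 0 < α) (p q : ℝ)
    (hq : q = 1 - p) (hp : 0 < p) (hp1 : p < 1) (z : ℝ) (hz : 0 ≤ z)
    (k : ℕ) (hk : 1 ≤ k) (hkα : k ≤ α) :
    h2 α p z k ≤ q ^ ((k : ℤ) - (α : ℤ)) :=
  h2_le_general α p q hq hp hp1 z hz k hk hkα
end

section
/- Let α be a positive integer, 0 < p = 1 - q < 1, z ≥ 0, and let g_z be the solution of the binomial Stein equation (g_z(0) = 0, g_z(k) = -∑_{j=k}^{α} [(α-k)!/(α-j)!]·[(k-1)!/j!]·(p/q)^{j-k}·[(j-z)^+ - E(B_{α,p}-z)^+] for 1 ≤ k ≤ α, g_z(α+1) = 0). Then |Δg_z(k)| ≤ 2q^{1-α} for all 0 ≤ k ≤ α, where Δg_z(k) = g_z(k+1) - g_z(k). -/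
open Finset

/-!
With `w j = P(B = j)`, the coefficients of `g_z(k)` are `w j / (k w k)`, so
`g_z(k) = -Cov(f(B), 1{B ≥ k}) / (k w k)` for the call function `f j = (j - z)⁺`.
This covariance is nonnegative by Chebyshev's association inequality (`f` is monotone),
and, as `0 ≤ f j ≤ j` and `E f(B) ≥ 0`, it is at most `E[B; B ≥ k] = α p P(B_{α-1,p} ≥ k - 1)`,
which the union bound makes `≤ k C(α,k) p^k`. Hence `|g_z(k)| ≤ q^(k-α) ≤ q^(1-α)`, and the bound on
`Δg_z` follows from the triangle inequality.
-/

noncomputable def binomWeight (n : ℕ) (p : ℝ) (j : ℕ) : ℝ :=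
  n.choose j * p ^ j * (1 - p) ^ (n - j)

section binomWeight

variable {p : ℝ}

lemma binomWeight_nonneg (hp : 0 ≤ p) (hp1 : p ≤ 1) (n j : ℕ) : 0 ≤ binomWeight n p j := by
  have : 0 ≤ 1 - p := by linarith
  unfold binomWeight
  positivity

lemma sum_binomWeight (n : ℕ) (p : ℝ) : ∑ j ∈ range (n + 1), binomWeight n p j = 1 := by
  have h := add_pow p (1 - p) n
  rw [add_sub_cancel, one_pow] at h
  rw [h]
  exact sum_congr rfl fun j _ => by unfold binomWeight; ring

lemma binomCallExp_eq_sum (α : ℕ) (p z : ℝ) :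
    binomCallExp α p z = ∑ j ∈ range (α + 1), binomWeight α p j * max ((j : ℝ) - z) 0 :=
  rfl

lemma succ_mul_binomWeight_succ (n j : ℕ) (p : ℝ) :
    ((j + 1 : ℕ) : ℝ) * binomWeight (n + 1) p (j + 1) = (n + 1) * p * binomWeight n p j := by
  have h : ((n + 1) * n.choose j : ℝ) = (n + 1).choose (j + 1) * (j + 1) := by
    exact_mod_cast Nat.add_one_mul_choose_eq n j
  simp only [binomWeight, Nat.add_sub_add_right, pow_succ]
  push_cast
  linear_combination (-(p ^ j * p * (1 - p) ^ (n - j))) * h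

/-- Union bound over the `k`-subsets of successes. -/
lemma sum_Ico_binomWeight_le (hp : 0 ≤ p) (hp1 : p ≤ 1) (n k : ℕ) :
    ∑ j ∈ Ico k (n + 1), binomWeight n p j ≤ n.choose k * p ^ k := by
  rcases le_or_gt k n with hkn | hnk
  · calc ∑ j ∈ Ico k (n + 1), binomWeight n p j
        ≤ ∑ j ∈ Ico k (n + 1), n.choose k * p ^ k * binomWeight (n - k) p (j - k) := by
          refine sum_le_sum fun j hj => ?_
          obtain ⟨hkj, hjn⟩ : k ≤ j ∧ j < n + 1 := mem_Ico.mp hj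
          have hchoose : (n.choose j : ℝ) ≤ n.choose k * (n - k).choose (j - k) := by
            rw [← Nat.cast_mul, ← Nat.choose_mul hkj]
            exact_mod_cast Nat.le_mul_of_pos_right _ (Nat.choose_pos hkj)
          have hpow : p ^ j = p ^ k * p ^ (j - k) := by rw [← pow_add, Nat.add_sub_cancel' hkj]
          have hsub : n - j = n - k - (j - k) := by omega
          have hweight : 0 ≤ p ^ j * (1 - p) ^ (n - j) :=
            mul_nonneg (pow_nonneg hp _) (pow_nonneg (by linarith) _)
          calc binomWeight n p j = n.choose j * (p ^ j * (1 - p) ^ (n - j)) := by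
                rw [binomWeight, mul_assoc]
            _ ≤ n.choose k * (n - k).choose (j - k) * (p ^ j * (1 - p) ^ (n - j)) :=
                mul_le_mul_of_nonneg_right hchoose hweight
            _ = n.choose k * p ^ k * binomWeight (n - k) p (j - k) := by
                rw [binomWeight, ← hsub, hpow]; ring
      _ = n.choose k * p ^ k := by
          rw [← mul_sum, sum_Ico_eq_sum_range, show n + 1 - k = n - k + 1 by omega]
          simp only [Nat.add_sub_cancel_left, sum_binomWeight, mul_one]
  · rw [Ico_eq_empty (by omega), sum_empty]
    positivity

lemma sum_Ico_natCast_mul_binomWeight_le (hp : 0 ≤ p) (hp1 : p ≤ 1) {n k : ℕ} (hk : 1 ≤ k) :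
    ∑ j ∈ Ico k (n + 1), (j : ℝ) * binomWeight n p j ≤ k * n.choose k * p ^ k := by
  obtain ⟨k, rfl⟩ := Nat.exists_eq_add_of_le' hk
  rcases n with _ | n
  · simp
  have hchoose : ((n + 1 : ℕ) : ℝ) * n.choose k = (k + 1 : ℕ) * (n + 1).choose (k + 1) := by
    exact_mod_cast (Nat.add_one_mul_choose_eq n k).trans (mul_comm _ _)
  calc ∑ j ∈ Ico (k + 1) (n + 1 + 1), (j : ℝ) * binomWeight (n + 1) p j
      = (n + 1) * p * ∑ j ∈ Ico k (n + 1), binomWeight n p j := by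
        rw [← sum_Ico_add', mul_sum]
        exact sum_congr rfl fun j _ => succ_mul_binomWeight_succ n j p
    _ ≤ (n + 1) * p * (n.choose k * p ^ k) := by
        gcongr
        exact sum_Ico_binomWeight_le hp hp1 n k
    _ = (k + 1 : ℕ) * (n + 1).choose (k + 1) * p ^ (k + 1) := by
        rw [← hchoose, pow_succ]; push_cast; ring

end binomWeight

/-- Chebyshev's association inequality for a monotone `f` and the indicator of `[k, N)`. -/
lemma sum_mul_sum_Ico_le_sum_Ico_mul {w f : ℕ → ℝ} {N : ℕ} (k : ℕ) (hw : ∀ i, 0 ≤ w i)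
    (hw1 : ∑ i ∈ range N, w i = 1) (hf : Monotone f) :
    (∑ i ∈ range N, w i * f i) * ∑ j ∈ Ico k N, w j ≤ ∑ j ∈ Ico k N, w j * f j := by
  rcases le_or_gt k N with hkN | hNk
  · rw [← sum_range_add_sum_Ico _ hkN] at hw1 ⊢
    have hlow : ∑ i ∈ range k, w i * f i ≤ (∑ i ∈ range k, w i) * f k := by
      rw [sum_mul]
      exact sum_le_sum fun i hi => mul_le_mul_of_nonneg_left (hf (mem_range.mp hi).le) (hw i)
    have hhigh : (∑ j ∈ Ico k N, w j) * f k ≤ ∑ j ∈ Ico k N, w j * f j := by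
      rw [sum_mul]
      exact sum_le_sum fun j hj => mul_le_mul_of_nonneg_left (hf (mem_Ico.mp hj).1) (hw j)
    have hW : 0 ≤ ∑ i ∈ range k, w i := sum_nonneg fun i _ => hw i
    have hT : 0 ≤ ∑ j ∈ Ico k N, w j := sum_nonneg fun j _ => hw j
    have hsplit : (∑ i ∈ range k, w i) * ∑ j ∈ Ico k N, w j * f j
        + (∑ j ∈ Ico k N, w j) * ∑ j ∈ Ico k N, w j * f j = ∑ j ∈ Ico k N, w j * f j := by
      rw [← add_mul, hw1, one_mul]
    nlinarith [mul_le_mul_of_nonneg_right hlow hT, mul_le_mul_of_nonneg_left hhigh hW]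
  · simp [Ico_eq_empty_of_le hNk.le]

lemma steinSol_coeff_eq {α k j : ℕ} {p : ℝ} (hk : 1 ≤ k) (hkj : k ≤ j) (hjα : j ≤ α)
    (hp : 0 < p) (hp1 : p < 1) :
    ((α - k).factorial : ℝ) / ((α - j).factorial : ℝ) *
        (((k - 1).factorial : ℝ) / (j.factorial : ℝ)) * (p / (1 - p)) ^ (j - k)
      = binomWeight α p j / (k * binomWeight α p k) := by
  have hq : 0 < 1 - p := by linarith
  have hfact : (k : ℝ) * (k - 1).factorial = k.factorial := by
    exact_mod_cast Nat.mul_factorial_pred (by omega)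
  have hpow : p ^ j = p ^ k * p ^ (j - k) := by rw [← pow_add, Nat.add_sub_cancel' hkj]
  have hqpow : (1 - p) ^ (α - k) = (1 - p) ^ (α - j) * (1 - p) ^ (j - k) := by
    rw [← pow_add]; congr 1; omega
  simp only [binomWeight, Nat.cast_choose ℝ hjα, Nat.cast_choose ℝ (hkj.trans hjα), div_pow,
    hpow, hqpow, ← hfact]
  field_simp

noncomputable def callTailCov (α : ℕ) (p z : ℝ) (k : ℕ) : ℝ :=
  ∑ j ∈ Icc k α, binomWeight α p j * (max ((j : ℝ) - z) 0 - binomCallExp α p z)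

lemma steinSol_eq_neg_callTailCov_div {α k : ℕ} {p : ℝ} (z : ℝ) (hk : 1 ≤ k) (hkα : k ≤ α)
    (hp : 0 < p) (hp1 : p < 1) :
    steinSol α p z k = -(callTailCov α p z k / (k * binomWeight α p k)) := by
  rw [steinSol, if_neg (by omega), callTailCov, sum_div]
  congr 1
  refine sum_congr rfl fun j hj => ?_
  obtain ⟨hkj, hjα⟩ := mem_Icc.mp hj
  rw [steinSol_coeff_eq hk hkj hjα hp hp1]
  ring

lemma callTailCov_nonneg {α : ℕ} {p : ℝ} (z : ℝ) (hp : 0 ≤ p) (hp1 : p ≤ 1) (k : ℕ) :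
    0 ≤ callTailCov α p z k := by
  have hmono : Monotone fun j : ℕ => max ((j : ℝ) - z) 0 := fun i j hij => by
    dsimp only
    gcongr
  have hcheb :=
    sum_mul_sum_Ico_le_sum_Ico_mul k (binomWeight_nonneg hp hp1 α) (sum_binomWeight α p) hmono
  rw [← binomCallExp_eq_sum, Ico_add_one_right_eq_Icc] at hcheb
  simp only [callTailCov, mul_sub, sum_sub_distrib, ← sum_mul]
  linarith

lemma callTailCov_le {α k : ℕ} {p z : ℝ} (hp : 0 ≤ p) (hp1 : p ≤ 1) (hz : 0 ≤ z)
    (hk : 1 ≤ k) :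
    callTailCov α p z k ≤ k * α.choose k * p ^ k := by
  have hcall : 0 ≤ binomCallExp α p z :=
    sum_nonneg fun j _ => mul_nonneg (binomWeight_nonneg hp hp1 α j) (le_max_right _ _)
  calc callTailCov α p z k ≤ ∑ j ∈ Icc k α, (j : ℝ) * binomWeight α p j := by
        refine sum_le_sum fun j _ => ?_
        rw [mul_comm]
        gcongr
        · exact binomWeight_nonneg hp hp1 α j
        · have : max ((j : ℝ) - z) 0 ≤ j := max_le (by linarith) (Nat.cast_nonneg j)
          linarith
    _ ≤ k * α.choose k * p ^ k := by
        rw [← Ico_add_one_right_eq_Icc]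
        exact sum_Ico_natCast_mul_binomWeight_le hp hp1 hk

lemma abs_steinSol_le {α : ℕ} {p z : ℝ} (hp : 0 < p) (hp1 : p < 1) (hz : 0 ≤ z) (k : ℕ) :
    |steinSol α p z k| ≤ (1 - p) ^ ((1 : ℤ) - α) := by
  have hq : 0 < 1 - p := by linarith
  by_cases hk : k = 0 ∨ α < k
  · rw [steinSol, if_pos hk, abs_zero]
    positivity
  push Not at hk
  have hk1 : 1 ≤ k := Nat.one_le_iff_ne_zero.mpr hk.1
  have hD : 0 < k * binomWeight α p k := by
    have := Nat.choose_pos hk.2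
    unfold binomWeight
    positivity
  rw [steinSol_eq_neg_callTailCov_div z hk1 hk.2 hp hp1, abs_neg,
    abs_of_nonneg (div_nonneg (callTailCov_nonneg z hp.le hp1.le k) hD.le), div_le_iff₀ hD]
  calc callTailCov α p z k ≤ k * α.choose k * p ^ k := callTailCov_le hp.le hp1.le hz hk1
    _ = (1 - p) ^ ((k : ℤ) - α) * (k * binomWeight α p k) := by
        have hcancel : (1 - p) ^ ((k : ℤ) - α) * (1 - p) ^ (α - k) = 1 := by
          rw [← zpow_natCast, ← zpow_add₀ hq.ne', Nat.cast_sub hk.2, sub_add_sub_cancel',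
            sub_self, zpow_zero]
        rw [binomWeight]
        linear_combination (-(k * α.choose k * p ^ k : ℝ)) * hcancel
    _ ≤ (1 - p) ^ ((1 : ℤ) - α) * (k * binomWeight α p k) :=
        mul_le_mul_of_nonneg_right
          (zpow_le_zpow_right_of_le_one₀ hq (by linarith) (by omega)) hD.le

theorem steinSol_diff_uniform_bound_general (α : ℕ) (p q : ℝ)
    (hq : q = 1 - p) (hp : 0 < p) (hp1 : p < 1) (z : ℝ) (hz : 0 ≤ z) :
    ∀ k ≤ α, |steinSol α p z (k + 1) - steinSol α p z k| ≤ 2 * q ^ ((1 : ℤ) - (α : ℤ)) := by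
  subst hq
  intro k _
  calc |steinSol α p z (k + 1) - steinSol α p z k|
      ≤ |steinSol α p z (k + 1)| + |steinSol α p z k| := abs_sub _ _
    _ ≤ 2 * (1 - p) ^ ((1 : ℤ) - (α : ℤ)) := by
        linarith [abs_steinSol_le (α := α) hp hp1 hz (k + 1),
          abs_steinSol_le (α := α) hp hp1 hz k]

/-- Uniform bound: for `z ≥ 0` and the Stein solution `g_z`,
`|Δg_z(k)| ≤ 2q^{1-α}` for all `0 ≤ k ≤ α`, where `Δg_z(k) = g_z(k+1) - g_z(k)`. -/
theorem steinSol_diff_uniform_bound (α : ℕ) (hα : 0 < α) (p q : ℝ)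
    (hq : q = 1 - p) (hp : 0 < p) (hp1 : p < 1) (z : ℝ) (hz : 0 ≤ z) :
    ∀ k ≤ α, |steinSol α p z (k + 1) - steinSol α p z k| ≤ 2 * q ^ ((1 : ℤ) - (α : ℤ)) :=
  steinSol_diff_uniform_bound_general α p q hq hp hp1 z hz
end

section
/- Let α be a positive integer, 0 < p = 1 - q < 1, z > 1, and let 1 ≤ k ≤ α with k ≥ z. Then h₁(k) = ∑_{j=k}^{α} [(α-k)!/(α-j)!]·[(k-1)!/j!]·(p/q)^{j-k}·(j-z)^+ satisfies h₁(k) ≤ 1 + (q^{k-α} - 1)/z. -/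
open Finset

/-!
The weight of `j = k` in `h₁(k)` is `1/k`, so with `k ≥ z` that term is `1 - z/k`. For `j > k`
we use `(j - z)^+ ≤ j`, and the weight times `j` is at most `C(α-k, j-k) (p/q)^{j-k} / k`
because `k! (j-k)! ≤ (j-1)!`. By the binomial theorem these bounds sum to
`((1 + p/q)^{α-k} - 1)/k = (q^{k-α} - 1)/k`, which is at most `(q^{k-α} - 1)/z` as `z ≤ k`.
-/

open scoped Nat

theorem Nat.factorial_mul_factorial_succ_le_factorial_add {k : ℕ} (hk : 1 ≤ k) (m : ℕ) :
    k ! * (m + 1)! ≤ (k + m)! := by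
  have hchoose : m + 1 ≤ (k + m).choose m := by
    rw [← Nat.choose_succ_self_right m]
    exact Nat.choose_le_choose m (by omega)
  calc k ! * (m + 1)! = (m + 1) * k ! * m ! := by rw [Nat.factorial_succ]; ring
    _ ≤ (k + m).choose m * k ! * m ! := by gcongr
    _ = (k + m)! := Nat.add_choose_mul_factorial_mul_factorial k m

noncomputable def h1Coeff (α k : ℕ) (r : ℝ) (j : ℕ) : ℝ :=
  ((α - k).factorial : ℝ) / ((α - j).factorial : ℝ) *
    (((k - 1).factorial : ℝ) / (j.factorial : ℝ)) * r ^ (j - k)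

section h1Coeff

variable {α k j : ℕ} {r : ℝ}

theorem h1_eq_sum_h1Coeff (α : ℕ) (p z : ℝ) (k : ℕ) :
    h1 α p z k = ∑ j ∈ Finset.Icc k α, h1Coeff α k (p / (1 - p)) j * max ((j : ℝ) - z) 0 :=
  rfl

theorem h1Coeff_self (hk : 1 ≤ k) : h1Coeff α k r k = (k : ℝ)⁻¹ := by
  rw [h1Coeff, Nat.sub_self, pow_zero, ← Nat.mul_factorial_pred (by omega : k ≠ 0)]
  push_cast
  field_simp

theorem h1Coeff_nonneg (hr : 0 ≤ r) : 0 ≤ h1Coeff α k r j := by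
  unfold h1Coeff
  positivity

theorem h1Coeff_mul_le (hk : 1 ≤ k) (hkj : k < j) (hjα : j ≤ α) (hr : 0 ≤ r) :
    h1Coeff α k r j * j ≤ (α - k).choose (j - k) * r ^ (j - k) / k := by
  have hchoose : ((α - k).choose (j - k) * (j - k)! * (α - j)! : ℝ) = (α - k)! := by
    have h := Nat.choose_mul_factorial_mul_factorial (show j - k ≤ α - k by omega)
    rw [show α - k - (j - k) = α - j by omega] at h
    exact_mod_cast h
  have hj : (j ! : ℝ) = j * (j - 1)! := by
    exact_mod_cast (Nat.mul_factorial_pred (by omega : j ≠ 0)).symm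
  have hfact : (k : ℝ) * (k - 1)! * (j - k)! ≤ (j - 1)! := by
    have h := Nat.factorial_mul_factorial_succ_le_factorial_add hk (j - k - 1)
    rw [show j - k - 1 + 1 = j - k by omega, show k + (j - k - 1) = j - 1 by omega,
      ← Nat.mul_factorial_pred (by omega : k ≠ 0)] at h
    exact_mod_cast h
  calc h1Coeff α k r j * j
      = (α - k).choose (j - k) * r ^ (j - k) * ((k - 1)! * (j - k)! / (j - 1)! : ℝ) := by
        have hj0 : (j : ℝ) ≠ 0 := Nat.cast_ne_zero.mpr (by omega)
        rw [h1Coeff, ← hchoose, hj]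
        field_simp
    _ ≤ (α - k).choose (j - k) * r ^ (j - k) * (k : ℝ)⁻¹ := by
        gcongr
        rw [div_le_iff₀ (by positivity), inv_mul_eq_div, le_div_iff₀ (by positivity)]
        linarith
    _ = (α - k).choose (j - k) * r ^ (j - k) / k := rfl

theorem sum_Icc_choose_mul_pow (hkα : k ≤ α) (r : ℝ) :
    ∑ j ∈ Finset.Icc k α, ((α - k).choose (j - k) : ℝ) * r ^ (j - k) = (r + 1) ^ (α - k) := by
  rw [← Finset.Ico_add_one_right_eq_Icc, Finset.sum_Ico_eq_sum_range,
    show α + 1 - k = α - k + 1 by omega, add_pow]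
  simp [mul_comm]

theorem sum_Ioc_h1Coeff_mul_le (hk : 1 ≤ k) (hkα : k ≤ α) (hr : 0 ≤ r) :
    ∑ j ∈ Finset.Ioc k α, h1Coeff α k r j * j ≤ ((r + 1) ^ (α - k) - 1) / k := by
  calc ∑ j ∈ Finset.Ioc k α, h1Coeff α k r j * j
      ≤ ∑ j ∈ Finset.Ioc k α, ((α - k).choose (j - k) : ℝ) * r ^ (j - k) / k := by
        refine Finset.sum_le_sum fun j hj => ?_
        rw [Finset.mem_Ioc] at hj
        exact h1Coeff_mul_le hk hj.1 hj.2 hr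
    _ = ((r + 1) ^ (α - k) - 1) / k := by
        rw [← Finset.sum_div, ← sum_Icc_choose_mul_pow hkα, Finset.Icc_eq_cons_Ioc hkα,
          Finset.sum_cons]
        simp

theorem h1_le_one_sub_div_add (hk : 1 ≤ k) (hkα : k ≤ α) {p z : ℝ} (hp : 0 ≤ p) (hp1 : p < 1)
    (hz : 0 ≤ z) (hzk : z ≤ k) :
    h1 α p z k ≤ 1 - z / k + ((p / (1 - p) + 1) ^ (α - k) - 1) / k := by
  have hr : 0 ≤ p / (1 - p) := div_nonneg hp (by linarith)
  have hhead : h1Coeff α k (p / (1 - p)) k * max ((k : ℝ) - z) 0 = 1 - z / k := by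
    have hk0 : (k : ℝ) ≠ 0 := Nat.cast_ne_zero.mpr (by omega)
    rw [h1Coeff_self hk, max_eq_left (sub_nonneg.2 hzk)]
    field_simp
  have htail : ∑ j ∈ Finset.Ioc k α, h1Coeff α k (p / (1 - p)) j * max ((j : ℝ) - z) 0
      ≤ ∑ j ∈ Finset.Ioc k α, h1Coeff α k (p / (1 - p)) j * j :=
    Finset.sum_le_sum fun j _ => mul_le_mul_of_nonneg_left
      (max_le (by linarith) (Nat.cast_nonneg j)) (h1Coeff_nonneg hr)
  rw [h1_eq_sum_h1Coeff, Finset.Icc_eq_cons_Ioc hkα, Finset.sum_cons, hhead]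
  linarith [sum_Ioc_h1Coeff_mul_le hk hkα hr]

end h1Coeff

theorem h1_le_of_ge_general (α : ℕ) (p q : ℝ)
    (hq : q = 1 - p) (hp : 0 < p) (hp1 : p < 1) (z : ℝ) (hz : 1 < z)
    (k : ℕ) (hk : 1 ≤ k) (hkα : k ≤ α) (hzk : z ≤ (k : ℝ)) :
    h1 α p z k ≤ 1 + (q ^ ((k : ℤ) - (α : ℤ)) - 1) / z := by
  subst hq
  have hq0 : 0 < 1 - p := by linarith
  have hpow : (1 - p) ^ ((k : ℤ) - (α : ℤ)) = (p / (1 - p) + 1) ^ (α - k) := by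
    rw [show p / (1 - p) + 1 = (1 - p)⁻¹ by field_simp; ring, inv_pow, ← zpow_natCast,
      ← zpow_neg, Nat.cast_sub hkα, neg_sub]
  have hQ : 1 ≤ (p / (1 - p) + 1) ^ (α - k) :=
    one_le_pow₀ (le_add_of_nonneg_left (div_nonneg hp.le hq0.le))
  have hz0 : 0 < z := by linarith
  have hdiv := div_le_div_of_nonneg_left (sub_nonneg.2 hQ) hz0 hzk
  have hzk_div : 0 ≤ z / k := by positivity
  rw [hpow]
  linarith [h1_le_one_sub_div_add hk hkα hp.le hp1 hz0.le hzk]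

/-- For `z > 1` and `1 ≤ k ≤ α` with `k ≥ z`,
`h₁(k) ≤ 1 + (q^{k-α} - 1)/z`. -/
theorem h1_le_of_ge (α : ℕ) (hα : 0 < α) (p q : ℝ)
    (hq : q = 1 - p) (hp : 0 < p) (hp1 : p < 1) (z : ℝ) (hz : 1 < z)
    (k : ℕ) (hk : 1 ≤ k) (hkα : k ≤ α) (hzk : z ≤ (k : ℝ)) :
    h1 α p z k ≤ 1 + (q ^ ((k : ℤ) - (α : ℤ)) - 1) / z :=
  h1_le_of_ge_general α p q hq hp hp1 z hz k hk hkα hzk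
end

section
/- Let α be a positive integer, 0 < p = 1 - q < 1, z > 1, and let k satisfy 2 ≤ k < z and k ≤ α. Then h₁(k) = ∑_{j=k}^{α} [(α-k)!/(α-j)!]·[(k-1)!/j!]·(p/q)^{j-k}·(j-z)^+ satisfies h₁(k) ≤ (q^{k-α} - 1)/z. -/
open Finset

/-! The term `j = k` of `h₁(k)` vanishes because `k < z`. For `j = k + i` with `i ≥ 1` the
factorial coefficient is `C(α-k, i) / (j · C(j-1, i))`. By AM-GM `z (j - z) ≤ j² / 4`, and
`j ≤ 4 C(j-1, i)` because `C(j-1, i) ≥ j - 1` when both `i` and `k - 1` are positive, so the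
term is at most `C(α-k, i) (p/q)^i / z`. The binomial theorem sums these bounds to
`((1 + p/q)^(α-k) - 1) / z = (q^(k-α) - 1) / z`. -/

theorem Nat.add_le_choose_add {a b : ℕ} (ha : 0 < a) (hb : 0 < b) : a + b ≤ (a + b).choose a := by
  induction b, hb using Nat.le_induction with
  | base => simp
  | succ b _ ih =>
    obtain ⟨a, rfl⟩ : ∃ c, a = c + 1 := ⟨a - 1, by omega⟩
    rw [show a + 1 + (b + 1) = (a + b + 1) + 1 by ring, Nat.choose_succ_succ',
      show a + b + 1 = a + 1 + b by ring]
    have := Nat.choose_pos (show a ≤ a + 1 + b by omega)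
    omega

theorem Nat.le_choose_of_pos_of_lt {n i : ℕ} (hi : 0 < i) (hin : i < n) : n ≤ n.choose i := by
  obtain ⟨m, rfl⟩ : ∃ m, n = i + m := ⟨n - i, by omega⟩
  exact Nat.add_le_choose_add hi (by omega)

theorem factorial_div_mul_factorial_div_eq {α k j : ℕ} (hk : 1 ≤ k) (hkj : k ≤ j) (hjα : j ≤ α) :
    ((α - k).factorial : ℝ) / (α - j).factorial * ((k - 1).factorial / j.factorial) =
      (α - k).choose (j - k) / (j * (j - 1).choose (j - k)) := by
  have hαkj := Nat.choose_mul_factorial_mul_factorial (show j - k ≤ α - k by omega)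
  have hjk := Nat.choose_mul_factorial_mul_factorial (show j - k ≤ j - 1 by omega)
  rw [show α - k - (j - k) = α - j by omega] at hαkj
  rw [show j - 1 - (j - k) = k - 1 by omega] at hjk
  have hj : j.factorial = j * (j - 1).factorial := by
    rw [← Nat.mul_factorial_pred (by omega)]
  rw [hj, ← hjk, ← hαkj]
  have hchoose_pos : (0 : ℝ) < (j - 1).choose (j - k) := by
    exact_mod_cast Nat.choose_pos (by omega)
  have hj_pos : (0 : ℝ) < j := by exact_mod_cast (show 0 < j by omega)
  push_cast
  field_simp

theorem max_sub_div_mul_le_inv {x z c : ℝ} (hz : 0 < z) (hx : 0 < x) (hxc : x ≤ 4 * c) :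
    max (x - z) 0 / (x * c) ≤ 1 / z := by
  rw [div_le_div_iff₀ (by nlinarith) hz, one_mul]
  rcases le_total x z with hxz | hzx
  · rw [max_eq_right (by linarith)]
    nlinarith
  · rw [max_eq_left (by linarith)]
    nlinarith [sq_nonneg (x - 2 * z)]

theorem sum_Ioc_choose_mul_pow {x : ℝ} {k α : ℕ} (hkα : k ≤ α) :
    ∑ j ∈ Ioc k α, ((α - k).choose (j - k) : ℝ) * x ^ (j - k) = (1 + x) ^ (α - k) - 1 := by
  have hIcc : ∑ j ∈ Icc k α, ((α - k).choose (j - k) : ℝ) * x ^ (j - k) = (1 + x) ^ (α - k) := by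
    rw [← Ico_add_one_right_eq_Icc, sum_Ico_eq_sum_range,
      show α + 1 - k = α - k + 1 by omega, add_comm (1 : ℝ), add_pow]
    simp [mul_comm]
  rw [← hIcc, ← add_sum_Ioc_eq_sum_Icc hkα]
  simp

theorem h1_summand_le {α k j : ℕ} {r z : ℝ} (hk : 2 ≤ k) (hkj : k < j) (hjα : j ≤ α)
    (hr : 0 ≤ r) (hz : 0 < z) :
    ((α - k).factorial : ℝ) / (α - j).factorial * ((k - 1).factorial / j.factorial) *
        r ^ (j - k) * max ((j : ℝ) - z) 0 ≤
      (α - k).choose (j - k) * r ^ (j - k) / z := by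
  have hchoose : (j : ℝ) ≤ 4 * (j - 1).choose (j - k) := by
    have := Nat.le_choose_of_pos_of_lt (show 0 < j - k by omega) (show j - k < j - 1 by omega)
    exact_mod_cast (by omega : j ≤ 4 * (j - 1).choose (j - k))
  rw [factorial_div_mul_factorial_div_eq (by omega) hkj.le hjα]
  calc _ = (α - k).choose (j - k) * r ^ (j - k) *
          (max ((j : ℝ) - z) 0 / (j * (j - 1).choose (j - k))) := by ring
    _ ≤ (α - k).choose (j - k) * r ^ (j - k) * (1 / z) := by
      refine mul_le_mul_of_nonneg_left ?_ (by positivity)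
      exact max_sub_div_mul_le_inv hz (by exact_mod_cast (show 0 < j by omega)) hchoose
    _ = _ := by ring

theorem h1_le_of_lt_general (α : ℕ) (p q : ℝ)
    (hq : q = 1 - p) (hp : 0 < p) (hp1 : p < 1) (z : ℝ)
    (k : ℕ) (hk : 2 ≤ k) (hkz : (k : ℝ) < z) (hkα : k ≤ α) :
    h1 α p z k ≤ (q ^ ((k : ℤ) - (α : ℤ)) - 1) / z := by
  have hz : 0 < z := by linarith [show (2 : ℝ) ≤ k by exact_mod_cast hk]
  have hq0 : 0 < q := by linarith
  have hpq : 1 + p / (1 - p) = q⁻¹ := by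
    rw [← hq]
    field_simp
    linarith
  have hqpow : q ^ ((k : ℤ) - (α : ℤ)) = q⁻¹ ^ (α - k) := by
    rw [show (k : ℤ) - α = -((α - k : ℕ) : ℤ) by omega, zpow_neg, zpow_natCast, inv_pow]
  rw [h1, ← add_sum_Ioc_eq_sum_Icc hkα, max_eq_right (by linarith), mul_zero, zero_add]
  calc _ ≤ ∑ j ∈ Ioc k α, ((α - k).choose (j - k) : ℝ) * (p / (1 - p)) ^ (j - k) / z := by
        refine sum_le_sum fun j hj => ?_
        rw [mem_Ioc] at hj
        exact h1_summand_le hk hj.1 hj.2 (div_nonneg hp.le (by linarith)) hz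
    _ = (q ^ ((k : ℤ) - (α : ℤ)) - 1) / z := by
      rw [← sum_div, sum_Ioc_choose_mul_pow hkα, hpq, hqpow]

/-- For `z > 1` and `2 ≤ k < z` with `k ≤ α`,
`h₁(k) ≤ (q^{k-α} - 1)/z`. -/
theorem h1_le_of_lt (α : ℕ) (hα : 0 < α) (p q : ℝ)
    (hq : q = 1 - p) (hp : 0 < p) (hp1 : p < 1) (z : ℝ) (hz : 1 < z)
    (k : ℕ) (hk : 2 ≤ k) (hkz : (k : ℝ) < z) (hkα : k ≤ α) :
    h1 α p z k ≤ (q ^ ((k : ℤ) - (α : ℤ)) - 1) / z :=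
  h1_le_of_lt_general α p q hq hp hp1 z k hk hkz hkα
end

section
/- (Corollary 3.1) Let X₁,…,Xₙ be independent Bernoulli random variables with P(Xᵢ = 1) = pᵢ = 1 - P(Xᵢ = 0), let Wₙ = ∑_{i=1}^{n} Xᵢ, and set p = (1/n)∑_{i=1}^{n} pᵢ, q = 1-p, with 0 < p < 1. Then d_sl(Wₙ, B_{n,p}) ≤ (2/qⁿ) ∑_{i=1}^{n} |p - pᵢ| pᵢ ∏_{j≠i} (1 - p p_j). -/
open Finset MeasureTheory ProbabilityTheory

/-!
Interpolate the success probabilities linearly, `r t i = p + t (pᵢ - p)`, and let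
`F t = E[f(S_t)]` with `f = (· - z)⁺` and `S_t` the Poisson-binomial sum with probabilities `r t`,
so that `F 1` and `F 0` are the two stop-loss transforms. Differentiating,
`F' t = ∑ᵢ (pᵢ - p) E[Δf(S_t⁽ⁱ⁾)]`, where `S⁽ⁱ⁾` omits the `i`-th summand. As
`∑ᵢ (pᵢ - p) = 0`, `E[Δf(S_t)]` may be subtracted from every term, and
`E[Δf(S_t)] - E[Δf(S_t⁽ⁱ⁾)] = r t i E[Δ²f(S_t⁽ⁱ⁾)]` with `|Δ²f| ≤ 1`. Hence
`|F' t| ≤ ∑ᵢ |pᵢ - p| r t i`, and integrating over `[0, 1]` gives at most `2 ∑ᵢ |pᵢ - p| pᵢ`,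
which is below the claimed bound since `∏_{j ≠ i} (1 - p pⱼ) ≥ qⁿ`.
-/

open scoped fwdDiff

section PoissonBinomial

variable {ι : Type*} [DecidableEq ι]

/-- `E[f(∑ i ∈ s, ξ i)]` for independent `ξ i ~ Bernoulli (r i)`. -/
noncomputable def poissonBinomExp (s : Finset ι) (r : ι → ℝ) (f : ℕ → ℝ) : ℝ :=
  ∑ T ∈ s.powerset, (∏ i ∈ T, r i) * (∏ i ∈ s \ T, (1 - r i)) * f #T

@[simp]
lemma poissonBinomExp_empty (r : ι → ℝ) (f : ℕ → ℝ) : poissonBinomExp ∅ r f = f 0 := by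
  simp [poissonBinomExp]

lemma poissonBinomExp_fwdDiff (s : Finset ι) (r : ι → ℝ) (f : ℕ → ℝ) :
    poissonBinomExp s r (Δ_[1] f) =
      poissonBinomExp s r (fun k ↦ f (k + 1)) - poissonBinomExp s r f := by
  simp only [poissonBinomExp, fwdDiff, mul_sub, sum_sub_distrib]

lemma poissonBinomExp_insert {s : Finset ι} {a : ι} (ha : a ∉ s) (r : ι → ℝ) (f : ℕ → ℝ) :
    poissonBinomExp (insert a s) r f =
      (1 - r a) * poissonBinomExp s r f + r a * poissonBinomExp s r (fun k ↦ f (k + 1)) := by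
  rw [poissonBinomExp, sum_powerset_insert ha, poissonBinomExp, poissonBinomExp, mul_sum, mul_sum]
  congr 1 <;> refine sum_congr rfl fun T hT ↦ ?_
  all_goals have haT : a ∉ T := fun h ↦ ha (mem_powerset.1 hT h)
  · rw [insert_sdiff_of_notMem _ haT, prod_insert fun h ↦ ha (mem_sdiff.1 h).1]
    ring
  · rw [prod_insert haT, insert_sdiff_insert, sdiff_insert_of_notMem ha, card_insert_of_notMem haT]
    ring

lemma poissonBinomExp_insert_eq_add {s : Finset ι} {a : ι} (ha : a ∉ s) (r : ι → ℝ)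
    (f : ℕ → ℝ) :
    poissonBinomExp (insert a s) r f =
      poissonBinomExp s r f + r a * poissonBinomExp s r (Δ_[1] f) := by
  rw [poissonBinomExp_insert ha, poissonBinomExp_fwdDiff]
  ring

lemma poissonBinomExp_eq_erase_add {s : Finset ι} {i : ι} (hi : i ∈ s) (r : ι → ℝ)
    (f : ℕ → ℝ) :
    poissonBinomExp s r f =
      poissonBinomExp (s.erase i) r f + r i * poissonBinomExp (s.erase i) r (Δ_[1] f) := by
  rw [← poissonBinomExp_insert_eq_add (notMem_erase i s), insert_erase hi]

lemma abs_poissonBinomExp_le {s : Finset ι} {r : ι → ℝ} (hr : ∀ i ∈ s, r i ∈ Set.Icc 0 1)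
    {f : ℕ → ℝ} {M : ℝ} (hf : ∀ k, |f k| ≤ M) : |poissonBinomExp s r f| ≤ M := by
  induction s using Finset.induction_on generalizing f with
  | empty => simpa using hf 0
  | insert a s ha ih =>
    have hrs : ∀ i ∈ s, r i ∈ Set.Icc 0 1 := fun i hi ↦ hr i (mem_insert_of_mem hi)
    have h := abs_le.1 (ih hrs hf)
    have hsucc := abs_le.1 (ih hrs fun k ↦ hf (k + 1))
    obtain ⟨hra0, hra1⟩ := hr a (mem_insert_self a s)
    rw [poissonBinomExp_insert ha, abs_le]
    constructor <;> nlinarith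

lemma poissonBinomExp_const (s : Finset ι) (p : ℝ) (f : ℕ → ℝ) :
    poissonBinomExp s (fun _ ↦ p) f =
      ∑ j ∈ range (#s + 1), ((#s).choose j : ℝ) * p ^ j * (1 - p) ^ (#s - j) * f j := by
  calc poissonBinomExp s (fun _ ↦ p) f
      = ∑ T ∈ s.powerset, (fun j ↦ p ^ j * (1 - p) ^ (#s - j) * f j) #T :=
        sum_congr rfl fun T hT ↦ by
          simp only [prod_const, card_sdiff_of_subset (mem_powerset.1 hT)]
    _ = _ := by
        rw [sum_powerset_apply_card fun j ↦ p ^ j * (1 - p) ^ (#s - j) * f j]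
        simp only [nsmul_eq_mul, mul_assoc]

lemma hasDerivAt_poissonBinomExp {r : ℝ → ι → ℝ} {r' : ι → ℝ} {t : ℝ}
    (hr : ∀ i, HasDerivAt (fun t ↦ r t i) (r' i) t) (s : Finset ι) (f : ℕ → ℝ) :
    HasDerivAt (fun t ↦ poissonBinomExp s (r t) f)
      (∑ i ∈ s, r' i * poissonBinomExp (s.erase i) (r t) (Δ_[1] f)) t := by
  induction s using Finset.induction_on generalizing f with
  | empty => simpa using hasDerivAt_const t (f 0)
  | insert a s ha ih =>
    simp only [poissonBinomExp_insert_eq_add ha]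
    refine ((ih f).add ((hr a).mul (ih (Δ_[1] f)))).congr_deriv ?_
    have hterm : ∀ i ∈ s, r' i * poissonBinomExp ((insert a s).erase i) (r t) (Δ_[1] f) =
        r' i * poissonBinomExp (s.erase i) (r t) (Δ_[1] f) +
          r t a * (r' i * poissonBinomExp (s.erase i) (r t) (Δ_[1] (Δ_[1] f))) := fun i hi ↦ by
      rw [erase_insert_of_ne (ne_of_mem_of_not_mem hi ha).symm,
        poissonBinomExp_insert_eq_add fun h ↦ ha (mem_of_mem_erase h)]
      ring
    rw [sum_insert ha, erase_insert ha, sum_congr rfl hterm, sum_add_distrib, ← mul_sum]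
    ring

lemma abs_sum_mul_poissonBinomExp_erase_le {s : Finset ι} {r : ι → ℝ}
    (hr : ∀ i ∈ s, r i ∈ Set.Icc 0 1) {c : ι → ℝ} (hc : ∑ i ∈ s, c i = 0) {f : ℕ → ℝ} {M : ℝ}
    (hf : ∀ k, |Δ_[1] (Δ_[1] f) k| ≤ M) :
    |∑ i ∈ s, c i * poissonBinomExp (s.erase i) r (Δ_[1] f)| ≤ M * ∑ i ∈ s, |c i| * r i := by
  have hcenter : ∑ i ∈ s, c i * poissonBinomExp (s.erase i) r (Δ_[1] f) =
      -∑ i ∈ s, c i * (r i * poissonBinomExp (s.erase i) r (Δ_[1] (Δ_[1] f))) := by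
    have hzero : ∑ i ∈ s, c i * poissonBinomExp s r (Δ_[1] f) = 0 := by
      rw [← sum_mul, hc, zero_mul]
    rw [← sub_zero (∑ i ∈ s, _), ← hzero, ← sum_sub_distrib, ← sum_neg_distrib]
    refine sum_congr rfl fun i hi ↦ ?_
    rw [poissonBinomExp_eq_erase_add hi r (Δ_[1] f)]
    ring
  rw [hcenter, abs_neg, mul_sum]
  refine (abs_sum_le_sum_abs _ _).trans (sum_le_sum fun i hi ↦ ?_)
  have hE : |poissonBinomExp (s.erase i) r (Δ_[1] (Δ_[1] f))| ≤ M :=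
    abs_poissonBinomExp_le (fun j hj ↦ hr j (mem_of_mem_erase hj)) hf
  rw [abs_mul, abs_mul, abs_of_nonneg (hr i hi).1]
  calc |c i| * (r i * |poissonBinomExp (s.erase i) r (Δ_[1] (Δ_[1] f))|)
      ≤ |c i| * (r i * M) := by gcongr; exact (hr i hi).1
    _ = M * (|c i| * r i) := by ring

theorem abs_poissonBinomExp_sub_const_le {s : Finset ι} {v : ι → ℝ} {p : ℝ}
    (hv : ∀ i ∈ s, v i ∈ Set.Icc 0 1) (hp : p ∈ Set.Icc 0 1) (hmean : ∑ i ∈ s, (v i - p) = 0)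
    {f : ℕ → ℝ} {M : ℝ} (hf : ∀ k, |Δ_[1] (Δ_[1] f) k| ≤ M) :
    |poissonBinomExp s v f - poissonBinomExp s (fun _ ↦ p) f| ≤
      M * ∑ i ∈ s, |v i - p| * (p + v i) / 2 := by
  set r : ℝ → ι → ℝ := fun t i ↦ p + t * (v i - p)
  have hr : ∀ t i, HasDerivAt (fun t ↦ r t i) (v i - p) t := fun t i ↦
    (hasDerivAt_mul_const (v i - p)).const_add p
  have hr_mem : ∀ t ∈ Set.Ico (0 : ℝ) 1, ∀ i ∈ s, r t i ∈ Set.Icc 0 1 := by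
    rintro t ⟨ht0, ht1⟩ i hi
    obtain ⟨hv0, hv1⟩ := hv i hi
    constructor <;> nlinarith [hp.1, hp.2]
  set B : ℝ → ℝ := fun t ↦ M * ∑ i ∈ s, |v i - p| * (p * t + (v i - p) * t ^ 2 / 2)
  have hB : ∀ t, HasDerivAt B (M * ∑ i ∈ s, |v i - p| * r t i) t := fun t ↦ by
    refine (HasDerivAt.fun_sum fun i _ ↦ ?_).const_mul M
    refine (((hasDerivAt_id t).const_mul p).add
      (((hasDerivAt_pow 2 t).const_mul (v i - p)).div_const 2)).const_mul _ |>.congr_deriv ?_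
    simp only [r]
    ring
  have hbound := image_norm_le_of_norm_deriv_right_le_deriv_boundary
    (f := fun t ↦ poissonBinomExp s (r t) f - poissonBinomExp s (r 0) f) (a := 0) (b := 1)
    (fun t _ ↦
      ((hasDerivAt_poissonBinomExp (hr t) s f).sub_const _).continuousAt.continuousWithinAt)
    (fun t _ ↦ ((hasDerivAt_poissonBinomExp (hr t) s f).sub_const _).hasDerivWithinAt)
    (by simp [B]) hB (fun t ht ↦ abs_sum_mul_poissonBinomExp_erase_le (hr_mem t ht) hmean hf)
    (Set.right_mem_Icc.2 zero_le_one)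
  have hr1 : r 1 = v := by ext i; simp [r]
  have hr0 : r 0 = fun _ ↦ p := by ext i; simp [r]
  have hB1 : B 1 = M * ∑ i ∈ s, |v i - p| * (p + v i) / 2 := by
    simp only [B, mul_sum]; congr 1; ext i; ring
  simpa [hr1, hr0, hB1] using hbound

end PoissonBinomial

section BernoulliSum

variable {Ω ι : Type*} {X : ι → Ω → ℝ}

lemma preimage_zero_eq_compl_preimage_one {Y : Ω → ℝ} (hY : ∀ ω, Y ω = 0 ∨ Y ω = 1) :
    Y ⁻¹' {0} = (Y ⁻¹' {1})ᶜ := by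
  ext ω
  rcases hY ω with h | h <;> simp [h]

variable [Fintype ι]

lemma sum_eq_card_filter_eq_one (hX : ∀ i ω, X i ω = 0 ∨ X i ω = 1) (ω : Ω) :
    ∑ i, X i ω = #{i | X i ω = 1} := by
  rw [natCast_card_filter]
  refine sum_congr rfl fun i _ ↦ ?_
  rcases hX i ω with h | h <;> simp [h]

lemma mem_iInter_preimage_ite_iff [DecidableEq ι] (hX : ∀ i ω, X i ω = 0 ∨ X i ω = 1)
    (T : Finset ι) (ω : Ω) :
    ω ∈ ⋂ i, X i ⁻¹' {if i ∈ T then 1 else 0} ↔ ({i | X i ω = 1} : Finset ι) = T := by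
  simp only [Set.mem_iInter, Set.mem_preimage, Set.mem_singleton_iff, Finset.ext_iff, mem_filter,
    mem_univ, true_and]
  refine forall_congr' fun i ↦ ?_
  rcases hX i ω with h | h <;> split_ifs <;> simp_all

theorem integral_comp_sum_eq_poissonBinomExp [DecidableEq ι] [MeasurableSpace Ω] {μ : Measure Ω}
    [IsProbabilityMeasure μ]
    (hmeas : ∀ i, Measurable (X i)) (hX : ∀ i ω, X i ω = 0 ∨ X i ω = 1)
    (hindep : iIndepFun X μ) (g : ℝ → ℝ) :
    ∫ ω, g (∑ i, X i ω) ∂μ =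
      poissonBinomExp univ (fun i ↦ μ.real {ω | X i ω = 1}) (fun k ↦ g k) := by
  set P : ι → ℝ := fun i ↦ μ.real {ω | X i ω = 1}
  set A : Finset ι → Set Ω := fun T ↦ ⋂ i, X i ⁻¹' {if i ∈ T then 1 else 0}
  have hA : ∀ T, MeasurableSet (A T) := fun T ↦
    .iInter fun i ↦ hmeas i (measurableSet_singleton _)
  have hdecomp : ∀ ω, g (∑ i, X i ω) =
      ∑ T ∈ univ.powerset, (A T).indicator (fun _ ↦ g #T) ω := by
    intro ω
    rw [sum_eq_single_of_mem ({i | X i ω = 1} : Finset ι) (mem_powerset.2 (subset_univ _)),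
      Set.indicator_of_mem ((mem_iInter_preimage_ite_iff hX _ ω).2 rfl),
      sum_eq_card_filter_eq_one hX]
    exact fun T _ hT ↦ Set.indicator_of_notMem
      (fun h ↦ hT ((mem_iInter_preimage_ite_iff hX T ω).1 h).symm) _
  have hfactor : ∀ (T : Finset ι) i, μ.real (X i ⁻¹' {if i ∈ T then 1 else 0}) =
      T.piecewise P (fun i ↦ 1 - P i) i := by
    intro T i
    by_cases hi : i ∈ T
    · rw [piecewise_eq_of_mem _ _ _ hi, if_pos hi]
      rfl
    · rw [piecewise_eq_of_notMem _ _ _ hi, if_neg hi,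
        preimage_zero_eq_compl_preimage_one (hX i),
        probReal_compl_eq_one_sub (hmeas i (measurableSet_singleton 1))]
      rfl
  have hprob : ∀ T, μ.real (A T) = (∏ i ∈ T, P i) * ∏ i ∈ univ \ T, (1 - P i) := by
    intro T
    rw [measureReal_def, hindep.meas_iInter fun i ↦ ⟨_, measurableSet_singleton _, rfl⟩,
      ENNReal.toReal_prod]
    simp_rw [← measureReal_def, hfactor, prod_piecewise, univ_inter]
  simp_rw [hdecomp]
  rw [integral_finsetSum _ fun T _ ↦ (integrable_const _).indicator (hA T)]
  refine sum_congr rfl fun T _ ↦ ?_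
  rw [integral_indicator_const _ (hA T), smul_eq_mul, hprob]

end BernoulliSum

lemma abs_fwdDiff_fwdDiff_posPart_le (z : ℝ) (k : ℕ) :
    |Δ_[1] (Δ_[1] fun j : ℕ ↦ max ((j : ℝ) - z) 0) k| ≤ 1 := by
  have hstep : ∀ m : ℕ, Δ_[1] (fun j : ℕ ↦ max ((j : ℝ) - z) 0) m ∈ Set.Icc 0 1 := fun m ↦ by
    simp only [fwdDiff, Nat.cast_add, Nat.cast_one, Set.mem_Icc, sub_nonneg]
    constructor
    · exact max_le_max_right 0 (by linarith)
    · rw [sub_le_iff_le_add]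
      exact max_le (by linarith [le_max_left ((m : ℝ) - z) 0])
        (by linarith [le_max_right ((m : ℝ) - z) 0])
  exact (abs_sub_le_of_le_of_le (hstep (k + 1)).1 (hstep (k + 1)).2 (hstep k).1
    (hstep k).2).trans_eq (sub_zero 1)

section Bounds

variable {ι : Type*} {s : Finset ι} {v : ι → ℝ} {p : ℝ}

lemma sum_abs_sub_mul_add_le (hv : ∀ i ∈ s, 0 ≤ v i) (hmean : ∑ i ∈ s, (v i - p) = 0) :
    ∑ i ∈ s, |v i - p| * (p + v i) / 2 ≤ 2 * ∑ i ∈ s, |v i - p| * v i := by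
  have hterm : ∀ i ∈ s,
      |v i - p| * (p + v i) / 2 ≤ 2 * (|v i - p| * v i) - p * (v i - p) / 2 := fun i hi ↦ by
    have := hv i hi
    rcases abs_cases (v i - p) with ⟨h, _⟩ | ⟨h, _⟩ <;> rw [h] <;> nlinarith
  calc ∑ i ∈ s, |v i - p| * (p + v i) / 2
      ≤ ∑ i ∈ s, (2 * (|v i - p| * v i) - p * (v i - p) / 2) := sum_le_sum hterm
    _ = 2 * ∑ i ∈ s, |v i - p| * v i - p * (∑ i ∈ s, (v i - p)) / 2 := by
        rw [sum_sub_distrib, ← mul_sum, ← sum_div, ← mul_sum]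
    _ = 2 * ∑ i ∈ s, |v i - p| * v i := by rw [hmean]; ring

lemma one_sub_pow_card_le_prod_erase [DecidableEq ι] (hv : ∀ i ∈ s, v i ≤ 1)
    (hp : p ∈ Set.Icc 0 1) (i : ι) : (1 - p) ^ #s ≤ ∏ j ∈ s.erase i, (1 - p * v j) := by
  obtain ⟨hp0, hp1⟩ := hp
  calc (1 - p) ^ #s ≤ (1 - p) ^ #(s.erase i) :=
        pow_le_pow_of_le_one (by linarith) (by linarith) card_erase_le
    _ = ∏ j ∈ s.erase i, (1 - p) := (prod_const _).symm
    _ ≤ ∏ j ∈ s.erase i, (1 - p * v j) :=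
        prod_le_prod (fun _ _ ↦ by linarith) fun j hj ↦ by
          nlinarith [hv j (mem_of_mem_erase hj)]

lemma sum_abs_sub_mul_le [DecidableEq ι] (hv : ∀ i ∈ s, v i ∈ Set.Icc 0 1) (hp0 : 0 ≤ p)
    (hp1 : p < 1) :
    ∑ i ∈ s, |v i - p| * v i ≤
      1 / (1 - p) ^ #s * ∑ i ∈ s, |p - v i| * v i * ∏ j ∈ s.erase i, (1 - p * v j) := by
  rw [mul_sum]
  refine sum_le_sum fun i hi ↦ ?_
  have hq : 0 < (1 - p) ^ #s := pow_pos (by linarith) _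
  have hprod := one_sub_pow_card_le_prod_erase (fun j hj ↦ (hv j hj).2) ⟨hp0, hp1.le⟩ i
  rw [abs_sub_comm, one_div_mul_eq_div, le_div_iff₀ hq]
  exact mul_le_mul_of_nonneg_left hprod (mul_nonneg (abs_nonneg _) (hv i hi).1)

end Bounds

lemma binomCallExp_eq_poissonBinomExp (n : ℕ) (p z : ℝ) :
    binomCallExp n p z =
      poissonBinomExp (univ : Finset (Fin n)) (fun _ ↦ p) (fun k ↦ max ((k : ℝ) - z) 0) := by
  rw [poissonBinomExp_const, card_fin]
  rfl

/-- Corollary 3.1: for independent Bernoulli random variables `X₁,…,Xₙ` with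
`P(Xᵢ = 1) = pᵢ`, `Wₙ = ∑ᵢ Xᵢ`, `p = (1/n)∑ᵢ pᵢ`, `q = 1 - p`, the stop-loss distance
satisfies `d_sl(Wₙ, B_{n,p}) ≤ (2/qⁿ) ∑ᵢ |p - pᵢ| pᵢ ∏_{j≠i} (1 - p p_j)`. -/
theorem binomial_approx_independent_CDO
    {Ω : Type*} [MeasurableSpace Ω] (μ : Measure Ω) [IsProbabilityMeasure μ]
    (n : ℕ) (X : Fin n → Ω → ℝ) (pvec : Fin n → ℝ)
    (hmeas : ∀ i, Measurable (X i))
    (hBer : ∀ i ω, X i ω = 0 ∨ X i ω = 1)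
    (hpvec : ∀ i, (μ {ω | X i ω = 1}).toReal = pvec i)
    (hindep : iIndepFun X μ)
    (W : Ω → ℝ) (hW : W = fun ω => ∑ i, X i ω)
    (p q : ℝ) (hp : p = (∑ i, pvec i) / n) (hq : q = 1 - p)
    (hp0 : 0 < p) (hp1 : p < 1) :
    (⨆ z : ℝ, |(∫ ω, max (W ω - z) 0 ∂μ) - binomCallExp n p z|) ≤
      (2 / q ^ n) *
        ∑ i, |p - pvec i| * pvec i * ∏ j ∈ Finset.univ.erase i, (1 - p * pvec j) := by
  have hn : n ≠ 0 := by
    rintro rfl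
    simp only [Nat.cast_zero, div_zero] at hp
    linarith
  have hlaw : (fun i ↦ μ.real {ω | X i ω = 1}) = pvec := funext hpvec
  have hv : ∀ i ∈ univ, pvec i ∈ Set.Icc 0 1 := fun i _ ↦
    hlaw ▸ ⟨measureReal_nonneg, measureReal_le_one⟩
  have hmean : ∑ i, (pvec i - p) = 0 := by
    rw [sum_sub_distrib, sum_const, card_fin, nsmul_eq_mul, hp,
      mul_div_cancel₀ _ (Nat.cast_ne_zero.2 hn), sub_self]
  have hweights := sum_abs_sub_mul_le hv hp0.le hp1
  rw [card_fin] at hweights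
  subst hW hq
  refine ciSup_le fun z ↦ ?_
  rw [integral_comp_sum_eq_poissonBinomExp hmeas hBer hindep fun x ↦ max (x - z) 0, hlaw,
    binomCallExp_eq_poissonBinomExp]
  calc _ ≤ 1 * ∑ i, |pvec i - p| * (p + pvec i) / 2 :=
        abs_poissonBinomExp_sub_const_le hv ⟨hp0.le, hp1.le⟩ hmean
          (abs_fwdDiff_fwdDiff_posPart_le z)
    _ ≤ 2 * ∑ i, |pvec i - p| * pvec i := by
        rw [one_mul]
        exact sum_abs_sub_mul_add_le (fun i hi ↦ (hv i hi).1) hmean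
    _ ≤ _ := by
        rw [div_eq_mul_one_div 2, mul_assoc]
        exact mul_le_mul_of_nonneg_left hweights zero_le_two
end
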